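/- The exponential map is the left inverse of the logarithmic map: for any two distinct points x, y ∈ ℍⁿ_K, the vector log_x(y) is a nonzero element of T_x and exp_x(log_x(y)) = y. -/

import Mathlib

open scoped BigOperators

/-- The Lorentz (Minkowski) inner product on `ℝ^{n+1}`:
`⟨x,y⟩_L = -x₀y₀ + Σ_{i=1}^n xᵢyᵢ`. -/
noncomputable def lorentz {n : ℕ} (x y : Fin (n + 1) → ℝ) : ℝ :=
  -(x 0 * y 0) + ∑ i : Fin n, x i.succ * y i.succ

/-- Membership in the hyperboloid model `ℍⁿ_K` of curvature `K < 0`. -/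
def onHyperboloid {n : ℕ} (K : ℝ) (x : Fin (n + 1) → ℝ) : Prop :=
  lorentz x x = 1 / K ∧ 0 < x 0

/-- The Lorentz norm `‖u‖_L = √⟨u,u⟩_L` (for vectors with `⟨u,u⟩_L ≥ 0`). -/
noncomputable def lnorm {n : ℕ} (u : Fin (n + 1) → ℝ) : ℝ :=
  Real.sqrt (lorentz u u)

/-- The inverse hyperbolic cosine `arccosh x = log (x + √(x² - 1))`. -/
noncomputable def arcosh (x : ℝ) : ℝ :=
  Real.log (x + Real.sqrt (x ^ 2 - 1))

/-- The exponential map of the hyperboloid with generalized radius `R`: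
`exp_x(v) = cosh(‖v‖_L/R)·x + sinh(‖v‖_L/R)·(R/‖v‖_L)·v`. -/
noncomputable def expMap {n : ℕ} (R : ℝ) (x v : Fin (n + 1) → ℝ) : Fin (n + 1) → ℝ :=
  Real.cosh (lnorm v / R) • x + (Real.sinh (lnorm v / R) * (R / lnorm v)) • v

/-- The logarithmic map of the hyperboloid of curvature `K`:
`log_x(y) = (arccosh α / √(α² − 1))·(y − αx)` with `α = K⟨x,y⟩_L`. -/
noncomputable def logMap {n : ℕ} (K : ℝ) (x y : Fin (n + 1) → ℝ) : Fin (n + 1) → ℝ :=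
  (arcosh (K * lorentz x y) / Real.sqrt ((K * lorentz x y) ^ 2 - 1)) •
    (y - (K * lorentz x y) • x)

/-- The hyperbolic distance `d(x,y) = R·arccosh(K⟨x,y⟩_L)`. -/
noncomputable def hdist {n : ℕ} (K R : ℝ) (x y : Fin (n + 1) → ℝ) : ℝ :=
  R * arcosh (K * lorentz x y)

/-- Parallel transport from `x` to `y` on the hyperboloid of generalized radius `R`:
`PT_{x→y}(v) = v + (⟨y,v⟩_L/(R² − ⟨x,y⟩_L))·(x+y)`. -/
noncomputable def pt {n : ℕ} (R : ℝ) (x y v : Fin (n + 1) → ℝ) : Fin (n + 1) → ℝ :=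
  v + (lorentz y v / (R ^ 2 - lorentz x y)) • (x + y)

/-- The origin `o = (R, 0, …, 0)` of the hyperboloid. -/
noncomputable def origin {n : ℕ} (R : ℝ) : Fin (n + 1) → ℝ :=
  fun i => if i = 0 then R else 0

/-!
Put `α = K⟨x,y⟩_L`. Then `z = y - α x` is the Lorentz-orthogonal projection of `y` onto `T_x`,
and `⟨z,z⟩_L = R²(α² - 1)`. The orthogonal complement of the timelike vector `x` is spacelike, and
two future-pointing timelike vectors have negative Lorentz product (both by Cauchy–Schwarz on the
spatial coordinates), so `α > 1` when `x ≠ y`. With `θ = arccosh α > 0` we get `sinh θ = √(α² - 1)`,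
`log_x(y) = (θ / sinh θ) z` has Lorentz norm `Rθ`, and `exp_x(log_x(y)) = cosh θ x + z = y`.
-/

section Lorentz

variable {n : ℕ}

lemma lorentz_comm (x y : Fin (n + 1) → ℝ) : lorentz x y = lorentz y x := by
  simp only [lorentz, mul_comm]

lemma lorentz_smul_left (a : ℝ) (u v : Fin (n + 1) → ℝ) :
    lorentz (a • u) v = a * lorentz u v := by
  simp only [lorentz, Pi.smul_apply, smul_eq_mul, mul_add, Finset.mul_sum, mul_assoc, mul_neg]

lemma lorentz_smul_right (a : ℝ) (u v : Fin (n + 1) → ℝ) :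
    lorentz u (a • v) = a * lorentz u v := by
  rw [lorentz_comm, lorentz_smul_left, lorentz_comm]

lemma lorentz_sub_left (u w v : Fin (n + 1) → ℝ) :
    lorentz (u - w) v = lorentz u v - lorentz w v := by
  simp only [lorentz, Pi.sub_apply, sub_mul, Finset.sum_sub_distrib]
  ring

lemma lorentz_sub_right (u w v : Fin (n + 1) → ℝ) :
    lorentz v (u - w) = lorentz v u - lorentz v w := by
  rw [lorentz_comm, lorentz_sub_left, lorentz_comm u, lorentz_comm w]

lemma lnorm_smul (a : ℝ) (u : Fin (n + 1) → ℝ) : lnorm (a • u) = |a| * lnorm u := by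
  rw [lnorm, lnorm, lorentz_smul_left, lorentz_smul_right, ← mul_assoc, ← sq,
    Real.sqrt_mul (sq_nonneg a), Real.sqrt_sq_eq_abs]

lemma sum_sq_succ_lt_of_lorentz_self_neg {x : Fin (n + 1) → ℝ} (hx : lorentz x x < 0) :
    ∑ i : Fin n, x i.succ ^ 2 < x 0 ^ 2 := by
  simp only [lorentz, ← sq] at hx
  linarith

lemma lorentz_neg_of_timelike {x y : Fin (n + 1) → ℝ} (hx : lorentz x x < 0)
    (hy : lorentz y y < 0) (hx0 : 0 < x 0) (hy0 : 0 < y 0) : lorentz x y < 0 := by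
  have hA := sum_sq_succ_lt_of_lorentz_self_neg hx
  have hB := sum_sq_succ_lt_of_lorentz_self_neg hy
  have hcs := Finset.sum_mul_sq_le_sq_mul_sq Finset.univ (fun i => x (Fin.succ i))
    (fun i => y (Fin.succ i))
  have hspatial : (∑ i : Fin n, x i.succ * y i.succ) ^ 2 < (x 0 * y 0) ^ 2 :=
    hcs.trans_lt <| mul_pow (x 0) (y 0) 2 ▸
      mul_lt_mul'' hA hB (Finset.sum_nonneg fun _ _ => sq_nonneg _)
        (Finset.sum_nonneg fun _ _ => sq_nonneg _)
  have := lt_of_pow_lt_pow_left₀ 2 (mul_pos hx0 hy0).le hspatial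
  rw [lorentz]
  linarith

lemma lorentz_self_pos_of_orthogonal {x z : Fin (n + 1) → ℝ} (hx : lorentz x x < 0)
    (hxz : lorentz x z = 0) (hz : z ≠ 0) : 0 < lorentz z z := by
  have hA := sum_sq_succ_lt_of_lorentz_self_neg hx
  set W := ∑ i : Fin n, z i.succ ^ 2
  have hcs : (x 0 * z 0) ^ 2 ≤ (∑ i : Fin n, x i.succ ^ 2) * W := by
    have hspatial : ∑ i : Fin n, x i.succ * z i.succ = x 0 * z 0 := by
      rw [lorentz] at hxz
      linarith
    exact hspatial ▸ Finset.sum_mul_sq_le_sq_mul_sq Finset.univ _ _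
  have hx0 : 0 < x 0 ^ 2 :=
    (Finset.sum_nonneg fun _ _ => sq_nonneg _).trans_lt hA
  have hW : 0 < W := by
    refine (show 0 ≤ W from Finset.sum_nonneg fun _ _ => sq_nonneg _).lt_of_ne' fun hW => hz ?_
    have hsucc : ∀ i : Fin n, z i.succ = 0 := fun i =>
      pow_eq_zero_iff two_ne_zero |>.1 <|
        (Finset.sum_eq_zero_iff_of_nonneg fun _ _ => sq_nonneg _).1 hW i (Finset.mem_univ i)
    have hz0 : z 0 = 0 := by
      rw [hW, mul_zero, mul_pow] at hcs
      exact pow_eq_zero_iff two_ne_zero |>.1 <|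
        (mul_eq_zero.1 (le_antisymm hcs (by positivity))).resolve_left hx0.ne'
    funext i
    exact Fin.cases hz0 hsucc i
  have : z 0 ^ 2 < W := by nlinarith [mul_lt_mul_of_pos_right hA hW]
  simp only [lorentz, ← sq]
  linarith

end Lorentz

section Hyperboloid

variable {n : ℕ} {K : ℝ} {x y : Fin (n + 1) → ℝ}

noncomputable def tangentProj (K : ℝ) (x y : Fin (n + 1) → ℝ) : Fin (n + 1) → ℝ :=
  y - (K * lorentz x y) • x

lemma lorentz_self_neg_of_onHyperboloid (hK : K < 0) (hx : onHyperboloid K x) :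
    lorentz x x < 0 :=
  hx.1 ▸ one_div_neg.2 hK

lemma lorentz_tangentProj (hK : K ≠ 0) (hx : lorentz x x = 1 / K) :
    lorentz x (tangentProj K x y) = 0 := by
  rw [tangentProj, lorentz_sub_right, lorentz_smul_right, hx]
  field_simp
  ring

lemma lorentz_tangentProj_self (hK : K ≠ 0) (hx : lorentz x x = 1 / K)
    (hy : lorentz y y = 1 / K) :
    lorentz (tangentProj K x y) (tangentProj K x y) = ((K * lorentz x y) ^ 2 - 1) * (1 / -K) := by
  rw [tangentProj, lorentz_sub_left, lorentz_sub_right, lorentz_sub_right, lorentz_smul_left,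
    lorentz_smul_right, lorentz_smul_left, lorentz_smul_right, lorentz_comm y x, hx, hy]
  field_simp
  ring

lemma mul_lorentz_pos (hK : K < 0) (hx : onHyperboloid K x) (hy : onHyperboloid K y) :
    0 < K * lorentz x y :=
  mul_pos_of_neg_of_neg hK <| lorentz_neg_of_timelike
    (lorentz_self_neg_of_onHyperboloid hK hx) (lorentz_self_neg_of_onHyperboloid hK hy) hx.2 hy.2

lemma tangentProj_ne_zero (hK : K < 0) (hx : onHyperboloid K x) (hy : onHyperboloid K y)
    (hxy : x ≠ y) : tangentProj K x y ≠ 0 := by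
  intro h
  set α := K * lorentz x y
  have hyx : y = α • x := sub_eq_zero.1 h
  have hα : 0 < α := mul_lorentz_pos hK hx hy
  have hα2 : α ^ 2 = 1 := by
    have hyy := hy.1
    rw [hyx, lorentz_smul_left, lorentz_smul_right, hx.1] at hyy
    rwa [mul_one_div, ← mul_div_assoc, ← sq, div_left_inj' hK.ne] at hyy
  have hα1 : α = 1 := by nlinarith
  exact hxy (by rw [hyx, hα1, one_smul])

lemma one_lt_mul_lorentz (hK : K < 0) (hx : onHyperboloid K x) (hy : onHyperboloid K y)
    (hxy : x ≠ y) : 1 < K * lorentz x y := by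
  have hα := mul_lorentz_pos hK hx hy
  have hz := lorentz_self_pos_of_orthogonal (lorentz_self_neg_of_onHyperboloid hK hx)
    (lorentz_tangentProj hK.ne hx.1) (tangentProj_ne_zero hK hx hy hxy)
  rw [lorentz_tangentProj_self hK.ne hx.1 hy.1] at hz
  have : 0 < (K * lorentz x y) ^ 2 - 1 := pos_of_mul_pos_left hz (one_div_pos.2 (neg_pos.2 hK)).le
  nlinarith

lemma lnorm_tangentProj {R : ℝ} (hK : K < 0) (hR : R = 1 / √(-K)) (hx : onHyperboloid K x)
    (hy : onHyperboloid K y) :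
    lnorm (tangentProj K x y) = R * √((K * lorentz x y) ^ 2 - 1) := by
  have hR2 : R ^ 2 = 1 / -K := by
    rw [hR, div_pow, one_pow, Real.sq_sqrt (neg_nonneg.2 hK.le)]
  have hR0 : 0 ≤ R := hR ▸ by positivity
  rw [lnorm, lorentz_tangentProj_self hK.ne hx.1 hy.1, ← hR2, Real.sqrt_mul' _ (sq_nonneg R),
    Real.sqrt_sq hR0, mul_comm]

lemma expMap_div_sinh_smul {R θ : ℝ} (hR : 0 < R) (hθ : 0 < θ) (x : Fin (n + 1) → ℝ)
    {z : Fin (n + 1) → ℝ} (hz : lnorm z = R * Real.sinh θ) :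
    expMap R x ((θ / Real.sinh θ) • z) = Real.cosh θ • x + z := by
  have hsinh : 0 < Real.sinh θ := Real.sinh_pos_iff.2 hθ
  have hnorm : lnorm ((θ / Real.sinh θ) • z) = θ * R := by
    rw [lnorm_smul, hz, abs_of_pos (by positivity)]
    field_simp
  rw [expMap, hnorm, mul_div_cancel_right₀ θ hR.ne', smul_smul]
  congr 1
  convert one_smul ℝ z using 2
  field_simp

end Hyperboloid

/-- the exponential map is the left inverse of the logarithmic
map: for distinct `x, y ∈ ℍⁿ_K`, `log_x(y)` is a nonzero element of `T_x`
and `exp_x(log_x(y)) = y`. -/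
theorem expMap_logMap {n : ℕ} (K R : ℝ) (hK : K < 0)
    (hR : R = 1 / Real.sqrt (-K))
    (x y : Fin (n + 1) → ℝ) (hx : onHyperboloid K x) (hy : onHyperboloid K y)
    (hxy : x ≠ y) :
    lorentz (logMap K x y) x = 0 ∧ logMap K x y ≠ 0 ∧
    expMap R x (logMap K x y) = y := by
  have hα : 1 < K * lorentz x y := one_lt_mul_lorentz hK hx hy hxy
  set θ := Real.arcosh (K * lorentz x y)
  have hlog : logMap K x y = (θ / Real.sinh θ) • tangentProj K x y := by
    rw [Real.sinh_arcosh hα.le]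
    rfl
  have hθ : 0 < θ := Real.arcosh_pos hα
  have hR0 : 0 < R := hR ▸ by have := neg_pos.2 hK; positivity
  have hz : lnorm (tangentProj K x y) = R * Real.sinh θ := by
    rw [lnorm_tangentProj hK hR hx hy, Real.sinh_arcosh hα.le]
  refine ⟨?_, ?_, ?_⟩
  · rw [hlog, lorentz_smul_left, lorentz_comm, lorentz_tangentProj hK.ne hx.1, mul_zero]
  · rw [hlog]
    exact smul_ne_zero (by have := Real.sinh_pos_iff.2 hθ; positivity)
      (tangentProj_ne_zero hK hx hy hxy)
  · rw [hlog, expMap_div_sinh_smul hR0 hθ x hz, Real.cosh_arcosh hα.le, tangentProj,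
      add_sub_cancel]
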